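/- arXiv:2111.08812 — 2 statements merged into one kernel-verified Lean document; each statement's English description precedes it below -/
import Mathlib

section
/- With w̄_k ∈ Z/2[w_1,w_2] defined by w̄_0 = 1, w̄_1 = w_1, w̄_k = w_1·w̄_{k-1} + w_2·w̄_{k-2}, one has w̄_{2^b - 1} = w_1^{2^b - 1} for all b ≥ 0. -/
open Finset MvPolynomial

/-- The dual Stiefel–Whitney classes in `Z/2[w₁,w₂]`: `w̄_0 = 1`, `w̄_1 = w₁`,
`w̄_k = w₁·w̄_{k-1} + w₂·w̄_{k-2}`.  Here `X 0 = w₁` and `X 1 = w₂`. -/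
noncomputable def wbar : ℕ → MvPolynomial (Fin 2) (ZMod 2)
  | 0 => 1
  | 1 => X 0
  | (k + 2) => X 0 * wbar (k + 1) + X 1 * wbar k

lemma wbar_add_two (k : ℕ) :
    wbar (k + 2) = X 0 * wbar (k + 1) + X 1 * wbar k := by
  rw [wbar]

lemma char_two_self (p : MvPolynomial (Fin 2) (ZMod 2)) : p + p = 0 :=
  CharTwo.add_self_eq_zero p

lemma wbar_key (n : ℕ) : wbar (2 * n + 1) = X 0 * wbar n ^ 2 ∧
    wbar (2 * n + 2) = wbar (n + 1) ^ 2 + X 1 * wbar n ^ 2 := by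
  induction n with
  | zero =>
    constructor
    · show wbar 1 = _
      rw [show wbar 1 = X 0 from rfl, show wbar 0 = (1 : MvPolynomial (Fin 2) (ZMod 2)) from rfl]
      ring
    · rw [show wbar 2 = X 0 * wbar 1 + X 1 * wbar 0 from rfl,
        show wbar 1 = X 0 from rfl, show wbar 0 = (1 : MvPolynomial (Fin 2) (ZMod 2)) from rfl]
      ring
  | succ k ih =>
    obtain ⟨h1, h2⟩ := ih
    have h3 : wbar (2 * (k + 1) + 1) = X 0 * wbar (k + 1) ^ 2 := by
      rw [show 2 * (k + 1) + 1 = (2 * k + 1) + 2 by ring, wbar_add_two,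
        show 2 * k + 1 + 1 = 2 * k + 2 by ring, h1, h2]
      linear_combination char_two_self (X 0 * X 1 * wbar k ^ 2)
    refine ⟨h3, ?_⟩
    rw [show 2 * (k + 1) + 2 = (2 * k + 2) + 2 by ring, wbar_add_two,
      show 2 * k + 2 + 1 = 2 * (k + 1) + 1 by ring, h3, h2,
      show k + 1 + 1 = k + 2 from rfl, wbar_add_two k]
    linear_combination (-1 : MvPolynomial (Fin 2) (ZMod 2)) * char_two_self (X 0 * wbar (k + 1) * (X 1 * wbar k))

/-- Lemma 5.1(d): `w̄_{2^b - 1} = w₁^{2^b - 1}` for all `b ≥ 0`. -/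
theorem wbar_two_pow_sub_one (b : ℕ) :
    wbar (2 ^ b - 1) = (X 0 : MvPolynomial (Fin 2) (ZMod 2)) ^ (2 ^ b - 1) := by
  induction b with
  | zero => simp [wbar]
  | succ b ih =>
    have hb : 1 ≤ 2 ^ b := Nat.one_le_two_pow
    have h : 2 ^ (b + 1) - 1 = 2 * (2 ^ b - 1) + 1 := by
      rw [pow_succ]; omega
    rw [h, (wbar_key _).1, ih]; ring
end

section
/- Let Q_n be the derivation on Z/2[w_1,w_2] with Q_n(w_1) = w_1^{2^{n+1}} and Q_n(w_2) = Σ_{c=0}^{n} w_1^{2^{n+1}-2^{c+1}+1}·w_2^{2^c}. Then in the quotient ring Z/2[w_1,w_2]/(w̄_k : k ≥ 2^{n+1}+2l), one has Q_n(w_2^{2l+1}) = w_1^{2l+2}·w̄_{2^{n+1}-1+2l}. -/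
open Finset MvPolynomial

namespace QnAux

abbrev R2 := MvPolynomial (Fin 2) (ZMod 2)

lemma two_eq_zero : (2 : R2) = 0 := by exact_mod_cast CharP.cast_eq_zero R2 2

lemma wbar_rec (k : ℕ) : wbar (k + 2) = X 0 * wbar (k + 1) + X 1 * wbar k := rfl

lemma wbar_double (m : ℕ) :
    wbar (2 * m + 1) = X 0 * wbar m ^ 2 ∧
      wbar (2 * m + 2) = wbar (m + 1) ^ 2 + X 1 * wbar m ^ 2 := by
  induction m with
  | zero =>
    constructor
    · show wbar 1 = X 0 * wbar 0 ^ 2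
      simp [wbar]
    · show wbar 2 = wbar 1 ^ 2 + X 1 * wbar 0 ^ 2
      rw [wbar_rec]
      simp [wbar]
      ring
  | succ m ih =>
    obtain ⟨h1, h2⟩ := ih
    have hodd : wbar (2 * (m + 1) + 1) = X 0 * wbar (m + 1) ^ 2 := by
      have e : 2 * (m + 1) + 1 = (2 * m + 1) + 2 := by ring
      rw [e, wbar_rec]
      have e1 : 2 * m + 1 + 1 = 2 * m + 2 := rfl
      rw [e1, h1, h2]
      linear_combination (X 0 * X 1 * wbar m ^ 2) * two_eq_zero
    refine ⟨hodd, ?_⟩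
    have e : 2 * (m + 1) + 2 = (2 * m + 2) + 2 := by ring
    rw [e, wbar_rec]
    have e2 : 2 * m + 2 + 1 = 2 * (m + 1) + 1 := by ring
    rw [e2, hodd, h2, wbar_rec m]
    linear_combination (- X 0 * X 1 * wbar (m + 1) * wbar m) * two_eq_zero

lemma wbar_pow2_sub_one (m : ℕ) : wbar (2 ^ m - 1) = X 0 ^ (2 ^ m - 1) := by
  induction m with
  | zero => simp [wbar]
  | succ m ih =>
    have h1 : (1 : ℕ) ≤ 2 ^ m := Nat.one_le_two_pow
    have hp : (2 : ℕ) ^ (m + 1) = 2 * 2 ^ m := by rw [pow_succ]; ring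
    have e : 2 ^ (m + 1) - 1 = 2 * (2 ^ m - 1) + 1 := by omega
    rw [e, (wbar_double _).1, ih, ← pow_mul, ← pow_succ']
    congr 1
    omega

/-- Lemma 5.1(e) in disguise:
`w₂ · w̄_{2^{m+1}-2} = ∑_{c=0}^{m} w₁^{2^{m+1}-2^{c+1}} w₂^{2^c}`. -/
lemma key (m : ℕ) :
    X 1 * wbar (2 ^ (m + 1) - 2) =
      ∑ c ∈ range (m + 1), X 0 ^ (2 ^ (m + 1) - 2 ^ (c + 1)) * X 1 ^ (2 ^ c) := by
  induction m with
  | zero => simp [wbar]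
  | succ m ih =>
    have h1 : (1 : ℕ) ≤ 2 ^ m := Nat.one_le_two_pow
    have hp1 : (2 : ℕ) ^ (m + 1) = 2 * 2 ^ m := by rw [pow_succ]; ring
    have hp2 : (2 : ℕ) ^ (m + 2) = 2 * 2 ^ (m + 1) := by rw [pow_succ]; ring
    have hidx : 2 ^ (m + 2) - 2 = 2 * (2 ^ (m + 1) - 2) + 2 := by omega
    rw [hidx, (wbar_double _).2]
    have hidx2 : 2 ^ (m + 1) - 2 + 1 = 2 ^ (m + 1) - 1 := by omega
    rw [hidx2, wbar_pow2_sub_one]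
    rw [Finset.sum_range_succ']
    have hsq : ∀ c ∈ range (m + 1),
        (X 0 ^ (2 ^ (m + 1) - 2 ^ (c + 1)) * X 1 ^ (2 ^ c) : R2) ^ 2
          = X 0 ^ (2 ^ (m + 2) - 2 ^ (c + 1 + 1)) * X 1 ^ (2 ^ (c + 1)) := by
      intro c hc
      have hc' : c ≤ m := Nat.lt_succ_iff.mp (mem_range.mp hc)
      have hle : (2 : ℕ) ^ (c + 1) ≤ 2 ^ (m + 1) :=
        Nat.pow_le_pow_right (by norm_num) (by omega)
      have hcc : (2 : ℕ) ^ (c + 1 + 1) = 2 * 2 ^ (c + 1) := by rw [pow_succ]; ring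
      have e1 : (2 ^ (m + 1) - 2 ^ (c + 1)) * 2 = 2 ^ (m + 2) - 2 ^ (c + 1 + 1) := by omega
      have e2 : (2 : ℕ) ^ c * 2 = 2 ^ (c + 1) := by rw [pow_succ]
      rw [mul_pow, ← pow_mul, ← pow_mul, e1, e2]
    rw [← Finset.sum_congr rfl hsq, ← sum_pow_char 2, ← ih]
    have e3 : (2 ^ (m + 1) - 1) * 2 = 2 ^ (m + 2) - 2 := by omega
    have e4 : (2 : ℕ) ^ (m + 2) - 2 ^ (0 + 1) = 2 ^ (m + 2) - 2 := by norm_num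
    rw [e4, ← pow_mul, e3]
    ring

lemma X1_mul_mem {t : ℕ} {x : R2}
    (hx : x ∈ Ideal.span {p : R2 | ∃ m, t ≤ m ∧ p = wbar m}) :
    X 1 * x ∈ Ideal.span {p : R2 | ∃ m, t + 1 ≤ m ∧ p = wbar m} := by
  refine Submodule.span_induction ?_ ?_ ?_ ?_ hx
  · rintro p ⟨m, hm, rfl⟩
    have e : X 1 * wbar m = wbar (m + 2) - X 0 * wbar (m + 1) := by rw [wbar_rec]; ring
    rw [e]
    exact sub_mem (Ideal.subset_span ⟨m + 2, by omega, rfl⟩)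
      (Ideal.mul_mem_left _ _ (Ideal.subset_span ⟨m + 1, by omega, rfl⟩))
  · simp
  · intro a b _ _ ha hb
    rw [mul_add]
    exact add_mem ha hb
  · intro r a _ ha
    rw [smul_eq_mul, mul_left_comm]
    exact Ideal.mul_mem_left _ _ ha

lemma key_mem (j k : ℕ) :
    X 1 ^ j * wbar k + X 0 ^ j * wbar (k + j) ∈
      Ideal.span {p : R2 | ∃ m, k + j + 1 ≤ m ∧ p = wbar m} := by
  induction j with
  | zero =>
    have h0 : (X 1 ^ 0 * wbar k + X 0 ^ 0 * wbar (k + 0) : R2) = 0 := by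
      simp only [pow_zero, one_mul, Nat.add_zero]
      linear_combination (wbar k) * two_eq_zero
    rw [h0]
    exact zero_mem _
  | succ j ih =>
    have hd : X 1 ^ (j + 1) * wbar k + X 0 ^ (j + 1) * wbar (k + (j + 1))
        = X 1 * (X 1 ^ j * wbar k + X 0 ^ j * wbar (k + j)) + X 0 ^ j * wbar (k + j + 2) := by
      have hr : wbar (k + j + 2) = X 0 * wbar (k + j + 1) + X 1 * wbar (k + j) := wbar_rec _
      have hk1 : k + (j + 1) = k + j + 1 := rfl
      rw [hk1, hr]
      linear_combination (- (X 1 * X 0 ^ j * wbar (k + j))) * two_eq_zero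
    rw [hd]
    refine add_mem ?_ ?_
    · exact X1_mul_mem ih
    · exact Ideal.mul_mem_left _ _ (Ideal.subset_span ⟨k + j + 2, by omega, rfl⟩)

end QnAux

open QnAux

/-- Proposition 5.9: with `Q_n` the derivation of `Z/2[w₁,w₂]` satisfying
`Q_n(w₁) = w₁^{2^{n+1}}` and `Q_n(w₂) = ∑_{c=0}^{n} w₁^{2^{n+1}-2^{c+1}+1}·w₂^{2^c}`, one has
`Q_n(w₂^{2l+1}) = w₁^{2l+2}·w̄_{2^{n+1}-1+2l}` in the quotient ring
`Z/2[w₁,w₂]/(w̄_k : k ≥ 2^{n+1}+2l) = H^*(Gr₂(ℝ^{2^{n+1}+1+2l}); Z/2)`. -/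
theorem Qn_w2_pow_odd (n l : ℕ)
    (Q : Derivation (ZMod 2) (MvPolynomial (Fin 2) (ZMod 2)) (MvPolynomial (Fin 2) (ZMod 2)))
    (hQ1 : Q (X 0) = X 0 ^ (2 ^ (n + 1)))
    (hQ2 : Q (X 1) = ∑ c ∈ range (n + 1),
        X 0 ^ (2 ^ (n + 1) - 2 ^ (c + 1) + 1) * X 1 ^ (2 ^ c)) :
    Ideal.Quotient.mk
        (Ideal.span {p : MvPolynomial (Fin 2) (ZMod 2) | ∃ k, 2 ^ (n + 1) + 2 * l ≤ k ∧ p = wbar k})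
        (Q (X 1 ^ (2 * l + 1)))
      = Ideal.Quotient.mk
        (Ideal.span {p : MvPolynomial (Fin 2) (ZMod 2) | ∃ k, 2 ^ (n + 1) + 2 * l ≤ k ∧ p = wbar k})
        (X 0 ^ (2 * l + 2) * wbar (2 ^ (n + 1) - 1 + 2 * l)) := by
  have h2 : (2 : R2) = 0 := two_eq_zero
  have hNge : 2 ≤ 2 ^ (n + 1) := by
    calc 2 = 2 ^ 1 := (pow_one 2).symm
    _ ≤ 2 ^ (n + 1) := Nat.pow_le_pow_right (by norm_num) (by omega)
  have hQpow : Q (X 1 ^ (2 * l + 1))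
      = X 0 * (X 1 ^ (2 * l + 1) * wbar (2 ^ (n + 1) - 2)) := by
    rw [Derivation.leibniz_pow, hQ2]
    simp only [smul_eq_mul, nsmul_eq_mul]
    have hcast : ((2 * l + 1 : ℕ) : R2) = 1 := by push_cast; rw [h2]; ring
    rw [hcast, one_mul]
    have he : 2 * l + 1 - 1 = 2 * l := by omega
    rw [he]
    have hfac : ∑ c ∈ range (n + 1), (X 0 : R2) ^ (2 ^ (n + 1) - 2 ^ (c + 1) + 1) * X 1 ^ (2 ^ c)
        = X 0 * ∑ c ∈ range (n + 1), X 0 ^ (2 ^ (n + 1) - 2 ^ (c + 1)) * X 1 ^ (2 ^ c) := by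
      rw [Finset.mul_sum]
      exact Finset.sum_congr rfl fun c _ => by rw [pow_succ]; ring
    rw [hfac, ← key n]
    ring
  rw [hQpow, Ideal.Quotient.eq]
  have hrw : X 0 * (X 1 ^ (2 * l + 1) * wbar (2 ^ (n + 1) - 2))
        - X 0 ^ (2 * l + 2) * wbar (2 ^ (n + 1) - 1 + 2 * l)
      = X 0 * (X 1 ^ (2 * l + 1) * wbar (2 ^ (n + 1) - 2)
          + X 0 ^ (2 * l + 1) * wbar ((2 ^ (n + 1) - 2) + (2 * l + 1))) := by
    have hidx : (2 ^ (n + 1) - 2) + (2 * l + 1) = 2 ^ (n + 1) - 1 + 2 * l := by omega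
    rw [hidx]
    linear_combination (- X 0 ^ (2 * l + 2) * wbar (2 ^ (n + 1) - 1 + 2 * l)) * h2
  rw [hrw]
  have hm := key_mem (2 * l + 1) (2 ^ (n + 1) - 2)
  have hidx2 : (2 ^ (n + 1) - 2) + (2 * l + 1) + 1 = 2 ^ (n + 1) + 2 * l := by omega
  rw [hidx2] at hm
  exact Ideal.mul_mem_left _ _ hm
end
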